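/- Let K be a d-dimensional simplicial complex. Suppose K collapses to a (d−1)-dimensional simplicial complex L and K also collapses to some d-dimensional simplicial complex M. Then M collapses to a simplicial complex of dimension at most d−1. -/

import Mathlib

/-- An (abstract) simplicial complex: a finite family of finite sets closed
under taking subsets. -/
def IsComplex {V : Type*} (K : Finset (Finset V)) : Prop :=
  ∀ α ∈ K, ∀ β ⊆ α, β ∈ K

/-- A face `τ` of `K` is maximal if no face of `K` strictly contains it. -/
def IsMaximalFace {V : Type*} (K : Finset (Finset V)) (τ : Finset V) : Prop :=
  τ ∈ K ∧ ∀ η ∈ K, τ ⊆ η → η = τ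

/-- `σ` is a free face of `K` with unique maximal coface `τ`:
`σ` is a nonempty non-maximal face contained in exactly one maximal face `τ`. -/
def IsFreePair {V : Type*} (K : Finset (Finset V)) (σ τ : Finset V) : Prop :=
  σ ∈ K ∧ σ.Nonempty ∧ ¬ IsMaximalFace K σ ∧
    IsMaximalFace K τ ∧ σ ⊆ τ ∧
    ∀ τ', IsMaximalFace K τ' → σ ⊆ τ' → τ' = τ

/-- The elementary collapse of `K` at the face `σ`:
remove `σ` and all faces above `σ`. -/
def collapseAt {V : Type*} [DecidableEq V] (K : Finset (Finset V)) (σ : Finset V) :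
    Finset (Finset V) :=
  K.filter fun ϑ => ¬ σ ⊆ ϑ

/-- `K'` is an elementary collapse of `K`. -/
def ElemCollapse {V : Type*} [DecidableEq V] (K K' : Finset (Finset V)) : Prop :=
  ∃ σ τ : Finset V, IsFreePair K σ τ ∧ K' = collapseAt K σ

/-- `K` collapses to `L`: a (possibly empty) sequence of elementary collapses
leads from `K` to `L`. -/
def CollapsesTo {V : Type*} [DecidableEq V] (K L : Finset (Finset V)) : Prop :=
  Relation.ReflTransGen ElemCollapse K L

/-- `K` has dimension exactly `d`: every face has at most `d + 1` vertices and
some face has exactly `d + 1` vertices (the dimension of a face `α` is `|α| - 1`). -/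
def DimEq {V : Type*} (K : Finset (Finset V)) (d : ℕ) : Prop :=
  (∀ α ∈ K, α.card ≤ d + 1) ∧ ∃ α ∈ K, α.card = d + 1

/-- The constrain complex of the pair `(M, L)`:
faces of `L` contained in some face of `M \ L`. -/
def constrainComplex {V : Type*} [DecidableEq V] (M L : Finset (Finset V)) :
    Finset (Finset V) :=
  L.filter fun ϑ => ∃ η ∈ M \ L, ϑ ⊆ η


/-! Follow the collapse of `K` to the low-dimensional `L` one elementary collapse `(σ, τ)` at a
time, keeping a collapse `Z` of `M` all of whose top faces (those with `d + 1` vertices) are still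
faces of the current complex `X`. When `τ` is a top face of `Z`, every codimension-one face of `τ`
containing `σ` is free in `Z`, because its only other possible cofaces in `Z` are top faces, hence
faces of `X` containing `σ`, hence contained in `τ`; collapsing `Z` there removes `τ`. Otherwise the
faces that leave `X` leave no top face behind in `Z`. Once `X = L`, no top face of `Z` remains. -/

section

variable {V : Type*}

theorem exists_isMaximalFace_superset {K : Finset (Finset V)} {η : Finset V} (hη : η ∈ K) :
    ∃ τ, IsMaximalFace K τ ∧ η ⊆ τ := by
  obtain ⟨τ, hητ, hτ, hmax⟩ := K.exists_le_maximal hη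
  exact ⟨τ, ⟨hτ, fun ϑ hϑ hτϑ => (hmax hϑ hτϑ).antisymm hτϑ⟩, hητ⟩

theorem IsFreePair.subset_of_subset {K : Finset (Finset V)} {σ τ η : Finset V}
    (h : IsFreePair K σ τ) (hη : η ∈ K) (hση : σ ⊆ η) : η ⊆ τ := by
  obtain ⟨τ', hτ', hητ'⟩ := exists_isMaximalFace_superset hη
  exact h.2.2.2.2.2 τ' hτ' (hση.trans hητ') ▸ hητ'

theorem IsFreePair.ssubset {K : Finset (Finset V)} {σ τ : Finset V} (h : IsFreePair K σ τ) :
    σ ⊂ τ :=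
  h.2.2.2.2.1.ssubset_of_ne fun hστ => h.2.2.1 (hστ ▸ h.2.2.2.1)

theorem isFreePair_of_forall_ssubset {K : Finset (Finset V)} {σ τ : Finset V} (hσ : σ ∈ K)
    (hσne : σ.Nonempty) (hτ : τ ∈ K) (hστ : σ ⊂ τ) (huniq : ∀ η ∈ K, σ ⊂ η → η = τ) :
    IsFreePair K σ τ := by
  have hτmax : IsMaximalFace K τ := ⟨hτ, fun η hη hτη => huniq η hη (hστ.trans_subset hτη)⟩
  refine ⟨hσ, hσne, fun hσmax => hστ.ne (hσmax.2 τ hτ hστ.subset).symm, hτmax, hστ.subset, ?_⟩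
  intro τ' hτ' hστ'
  refine huniq τ' hτ'.1 (hστ'.ssubset_of_ne ?_)
  rintro rfl
  exact hστ.ne (hτ'.2 τ hτ hστ.subset).symm

end

section

variable {V : Type*} [DecidableEq V]

theorem mem_collapseAt {K : Finset (Finset V)} {σ η : Finset V} :
    η ∈ collapseAt K σ ↔ η ∈ K ∧ ¬ σ ⊆ η :=
  Finset.mem_filter

theorem collapseAt_subset (K : Finset (Finset V)) (σ : Finset V) : collapseAt K σ ⊆ K :=
  Finset.filter_subset _ _

theorem IsComplex.collapseAt {K : Finset (Finset V)} (hK : IsComplex K) (σ : Finset V) :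
    IsComplex (collapseAt K σ) := by
  intro α hα β hβα
  rw [mem_collapseAt] at hα ⊢
  exact ⟨hK α hα.1 β hβα, fun hσβ => hα.2 (hσβ.trans hβα)⟩

theorem ElemCollapse.subset {K K' : Finset (Finset V)} (h : ElemCollapse K K') : K' ⊆ K := by
  obtain ⟨σ, -, -, rfl⟩ := h
  exact collapseAt_subset K σ

theorem CollapsesTo.subset {K L : Finset (Finset V)} (h : CollapsesTo K L) : L ⊆ K := by
  induction h with
  | refl => exact Finset.Subset.refl K
  | tail _ hstep ih => exact hstep.subset.trans ih

theorem IsComplex.of_collapsesTo {K L : Finset (Finset V)} (hK : IsComplex K)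
    (h : CollapsesTo K L) : IsComplex L := by
  induction h with
  | refl => exact hK
  | tail _ hstep ih =>
    obtain ⟨σ, -, -, rfl⟩ := hstep
    exact ih.collapseAt σ

theorem IsFreePair.subset_of_notMem_collapseAt {K : Finset (Finset V)} {σ τ η : Finset V}
    (h : IsFreePair K σ τ) (hη : η ∈ K) (hη' : η ∉ collapseAt K σ) : η ⊆ τ :=
  h.subset_of_subset hη (not_not.mp fun hση => hη' (mem_collapseAt.mpr ⟨hη, hση⟩))

theorem IsFreePair.isFreePair_erase {d : ℕ} {X Z : Finset (Finset V)} {σ τ : Finset V} {x : V}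
    (hfree : IsFreePair X σ τ) (hZ : IsComplex Z) (hZX : ∀ η ∈ Z, η ∉ X → η.card ≤ d)
    (hτZ : τ ∈ Z) (hτcard : τ.card = d + 1) (hxτ : x ∈ τ) (hxσ : x ∉ σ) :
    IsFreePair Z (τ.erase x) τ := by
  have hσx : σ ⊆ τ.erase x := Finset.subset_erase.mpr ⟨hfree.2.2.2.2.1, hxσ⟩
  refine isFreePair_of_forall_ssubset (hZ τ hτZ _ (Finset.erase_subset x τ))
    (hfree.2.1.mono hσx) hτZ (Finset.erase_ssubset hxτ) fun η hη hxη => ?_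
  have hηcard : τ.card ≤ η.card := by
    have := Finset.card_lt_card hxη
    rw [Finset.card_erase_of_mem hxτ] at this
    omega
  have hηX : η ∈ X := not_not.mp fun hηX => by have := hZX η hη hηX; omega
  exact Finset.eq_of_subset_of_card_le (hfree.subset_of_subset hηX (hσx.trans hxη.subset)) hηcard

theorem ElemCollapse.exists_collapsesTo_of_card_le {d : ℕ} {X X' Z : Finset (Finset V)}
    (hXX' : ElemCollapse X X') (hX : ∀ α ∈ X, α.card ≤ d + 1) (hZ : IsComplex Z)
    (hZX : ∀ η ∈ Z, η ∉ X → η.card ≤ d) :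
    ∃ Z', CollapsesTo Z Z' ∧ ∀ η ∈ Z', η ∉ X' → η.card ≤ d := by
  obtain ⟨σ, τ, hfree, rfl⟩ := hXX'
  by_cases hτ : τ ∈ Z ∧ τ.card = d + 1
  · obtain ⟨x, hxτ, hxσ⟩ := Finset.exists_of_ssubset hfree.ssubset
    have hfreeZ := hfree.isFreePair_erase hZ hZX hτ.1 hτ.2 hxτ hxσ
    refine ⟨collapseAt Z (τ.erase x), .single ⟨_, τ, hfreeZ, rfl⟩, fun η hη hηX' => ?_⟩
    rw [mem_collapseAt] at hη
    by_cases hηX : η ∈ X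
    · have hητ : η ⊂ τ := (hfree.subset_of_notMem_collapseAt hηX hηX').ssubset_of_ne
        fun hητ => hη.2 (hητ ▸ Finset.erase_subset x τ)
      have := Finset.card_lt_card hητ
      omega
    · exact hZX η hη.1 hηX
  · refine ⟨Z, .refl, fun η hη hηX' => ?_⟩
    by_cases hηX : η ∈ X
    · have hητ := hfree.subset_of_notMem_collapseAt hηX hηX'
      have hτcard := hX τ hfree.2.2.2.1.1
      by_contra! hηcard
      obtain rfl := Finset.eq_of_subset_of_card_le hητ (by omega)
      exact hτ ⟨hη, by omega⟩
    · exact hZX η hη hηX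

theorem CollapsesTo.exists_collapsesTo_of_card_le {d : ℕ} {X Y Z : Finset (Finset V)}
    (hXY : CollapsesTo X Y) (hX : ∀ α ∈ X, α.card ≤ d + 1) (hY : ∀ α ∈ Y, α.card ≤ d)
    (hZ : IsComplex Z) (hZX : ∀ η ∈ Z, η ∉ X → η.card ≤ d) :
    ∃ N, CollapsesTo Z N ∧ ∀ α ∈ N, α.card ≤ d := by
  induction hXY using Relation.ReflTransGen.head_induction_on generalizing Z with
  | refl => exact ⟨Z, .refl, fun α hα => if hαY : α ∈ Y then hY α hαY else hZX α hα hαY⟩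
  | head hstep _ ih =>
    obtain ⟨Z', hZZ', hZ'X'⟩ := hstep.exists_collapsesTo_of_card_le hX hZ hZX
    obtain ⟨N, hZ'N, hN⟩ :=
      ih (fun α hα => hX α (hstep.subset hα)) (hZ.of_collapsesTo hZZ') hZ'X'
    exact ⟨N, hZZ'.trans hZ'N, hN⟩

end

theorem dCollapsesCodimOne_general {V : Type*} [DecidableEq V] (d : ℕ) (hd : 1 ≤ d)
    (K L M : Finset (Finset V))
    (hK : IsComplex K) (hKd : DimEq K d)
    (hKL : CollapsesTo K L) (hLd : DimEq L (d - 1))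
    (hKM : CollapsesTo K M) :
    ∃ N : Finset (Finset V), CollapsesTo M N ∧ ∀ α ∈ N, α.card ≤ d :=
  hKL.exists_collapsesTo_of_card_le hKd.1 (fun α hα => by have := hLd.1 α hα; omega)
    (hK.of_collapsesTo hKM) fun η hη hηK => absurd (hKM.subset hη) hηK

/-- If a `d`-dimensional complex `K` collapses both to a `(d-1)`-dimensional
complex `L` and to some `d`-dimensional complex `M`, then `M` collapses to a
complex of dimension at most `d - 1`. -/
theorem dCollapsesCodimOne {V : Type*} [DecidableEq V] (d : ℕ) (hd : 1 ≤ d)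
    (K L M : Finset (Finset V))
    (hK : IsComplex K) (hKd : DimEq K d)
    (hKL : CollapsesTo K L) (hLd : DimEq L (d - 1))
    (hKM : CollapsesTo K M) (hMd : DimEq M d) :
    ∃ N : Finset (Finset V), CollapsesTo M N ∧ ∀ α ∈ N, α.card ≤ d :=
  dCollapsesCodimOne_general d hd K L M hK hKd hKL hLd hKM
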